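/- Let X be a Banach space, D a weak neighborhood basis at 0 in X, and P a property of finite sequences in X that is closed under taking initial segments. Then exactly one of the following holds: (i) for every normally weakly null collection (x_t)_{t∈D^{<ℕ}} ⊆ B_X, the set of t ∈ D^{<ℕ} such that (x_{t|_i})_{i=1}^{|t|} has P is big; (ii) there exists a normally weakly null collection (x_t)_{t∈D^{<ℕ}} ⊆ B_X such that for every infinite branch t ∈ D^ℕ, some finite initial segment of (x_{t|_i})_i fails P. -/

import Mathlib

open Filter

variable {D : Type*} [Preorder D]

/-- A subset of a directed set is cofinal if every element has an upper bound in it. -/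
def Cofinal (S : Set D) : Prop := ∀ u : D, ∃ v ∈ S, u ≤ v

/-- A subset is eventual if its complement is not cofinal. -/
def Eventual (S : Set D) : Prop := ¬ Cofinal Sᶜ

/-- Inevitable subsets of the tree of nonempty finite sequences from `D`. -/
def Inevitable (B : Set (List D)) : Prop :=
  Eventual {u : D | [u] ∈ B} ∧
    ∀ t ∈ B, t ≠ [] → Eventual {u : D | t ++ [u] ∈ B}

/-- A set of finite sequences is big if it contains an inevitable subset. -/
def Big (B : Set (List D)) : Prop := ∃ B' : Set (List D), B' ⊆ B ∧ Inevitable B'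

variable {X : Type*} [NormedAddCommGroup X] [NormedSpace ℝ X]

/-- A collection `(x_t)` indexed by nonempty finite sequences from `D` (where `ν u` is
the weak neighborhood of `0` associated to `u ∈ D`) is normally weakly null and
contained in `B_X` if for `t = (u_1, …, u_n)` one has `x_t ∈ B_X ∩ ν u_n`. -/
def NormallyWeaklyNull (ν : D → Set X) (x : List D → X) : Prop :=
  ∀ (t : List D) (u : D), ‖x (t ++ [u])‖ ≤ 1 ∧ x (t ++ [u]) ∈ ν u

/-- The finite sequence `(x_{t|_1}, …, x_{t|_n})` of values along the initial
segments of `t`. -/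
def branchSeq (x : List D → X) (t : List D) : List X :=
  (List.range t.length).map fun i => x (t.take (i + 1))

/-!
Play the game in which one player proposes `u ∈ D` and the other extends the current sequence
by some `w ≥ u`, the latter trying to leave `B = {t | P (branchSeq x t)}`. If the escaping
player cannot win from the root, the positions from which they cannot win form an inevitable
subset of `B`, so `B` is big. If they can, their strategy is a pruning `φ` of the tree along
which every branch leaves `B`; as `ν` is antitone, `x ∘ φ` is again normally weakly null and
witnesses (ii). The alternatives exclude each other because an inevitable set contains an
infinite branch.
-/

theorem Cofinal.mono {S T : Set D} (h : Cofinal S) (hST : S ⊆ T) : Cofinal T := fun u =>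
  let ⟨v, hv, huv⟩ := h u
  ⟨v, hST hv, huv⟩

theorem Eventual.mono {S T : Set D} (h : Eventual S) (hST : S ⊆ T) : Eventual T :=
  fun hT => h (hT.mono (Set.compl_subset_compl.mpr hST))

theorem eventual_iff {S : Set D} : Eventual S ↔ ∃ u, ∀ v, u ≤ v → v ∈ S := by
  simp only [Eventual, Cofinal, Set.mem_compl_iff, not_forall, not_exists, not_and, not_imp_comm,
    not_not]

theorem List.ofFn_succ_eq_append {α : Type*} (v : ℕ → α) (n : ℕ) :
    (List.ofFn fun i : Fin (n + 1) => v i) = (List.ofFn fun i : Fin n => v i) ++ [v n] := by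
  rw [List.ofFn_succ_last]
  rfl

def iterateExtend (c : List D → D) : ℕ → List D
  | 0 => []
  | n + 1 => iterateExtend c n ++ [c (iterateExtend c n)]

omit [Preorder D] in
theorem iterateExtend_eq_ofFn (c : List D → D) (n : ℕ) :
    iterateExtend c n = List.ofFn fun i : Fin n => c (iterateExtend c i) := by
  induction n with
  | zero => rfl
  | succ n ih => rw [List.ofFn_succ_eq_append (fun i => c (iterateExtend c i)), ← ih]; rfl

theorem Inevitable.exists_branch {B : Set (List D)} (hB : Inevitable B) :
    ∃ v : ℕ → D, ∀ n, (List.ofFn fun i : Fin (n + 1) => v i) ∈ B := by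
  have hext : ∀ t, t = [] ∨ t ∈ B → ∃ u, t ++ [u] ∈ B := by
    intro t ht
    have hev : Eventual {u | t ++ [u] ∈ B} := by
      by_cases ht0 : t = []
      · subst ht0; exact hB.1
      · exact hB.2 t (ht.resolve_left ht0) ht0
    obtain ⟨u, hu⟩ := eventual_iff.mp hev
    exact ⟨u, hu u le_rfl⟩
  have : Nonempty D := let ⟨u, _⟩ := hext [] (.inl rfl); ⟨u⟩
  choose! c hc using hext
  refine ⟨fun n => c (iterateExtend c n), fun n => ?_⟩
  rw [← iterateExtend_eq_ofFn]
  induction n with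
  | zero => exact hc [] (.inl rfl)
  | succ n ih => exact hc _ (.inr ih)

/-- From position `t`, the player answering each `u : D` with some `w ≥ u` can force the play
out of `B`. -/
inductive Escape (B : Set (List D)) : List D → Prop
  | base {t : List D} : t ∉ B → Escape B t
  | step {t : List D} (f : D → D) :
      (∀ u, u ≤ f u) → (∀ u, Escape B (t ++ [f u])) → Escape B t

def IsPruning (φ : List D → List D) : Prop :=
  ∀ s u, ∃ w, u ≤ w ∧ φ (s ++ [u]) = φ s ++ [w]

namespace Escape

variable {B : Set (List D)} {t : List D}

theorem of_cofinal (h : Cofinal {u | Escape B (t ++ [u])}) : Escape B t := by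
  choose f hf hle using h
  exact .step f hle hf

theorem eventual_not_of_not (h : ¬ Escape B t) : Eventual {u | ¬ Escape B (t ++ [u])} :=
  fun hc => h (of_cofinal (by simpa only [Set.compl_ofPred, not_not] using hc))

theorem exists_pruning (h : Escape B t) :
    ∃ φ, IsPruning φ ∧ φ [] = [] ∧
      ∀ v : ℕ → D, ∃ n, t ++ φ (List.ofFn fun i : Fin n => v i) ∉ B := by
  induction h with
  | base ht => exact ⟨id, fun s u => ⟨u, le_rfl, rfl⟩, rfl, fun _ => ⟨0, by simpa⟩⟩
  | step f hf _ ih =>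
    choose φ hφ hφ0 hleave using ih
    refine ⟨fun | [] => [] | u :: s => f u :: φ u s, ?_, rfl, fun v => ?_⟩
    · rintro (_ | ⟨u₀, s⟩) u
      · exact ⟨f u, hf u, by simp [hφ0]⟩
      · obtain ⟨w, hw, he⟩ := hφ u₀ s u
        exact ⟨w, hw, by simp [he]⟩
    · obtain ⟨n, hn⟩ := hleave (v 0) fun i => v (i + 1)
      refine ⟨n + 1, ?_⟩
      simpa [List.ofFn_succ] using hn

end Escape

theorem big_of_not_escape_nil {B : Set (List D)} (h : ¬ Escape B []) : Big B := by
  refine ⟨{t | t ≠ [] ∧ ¬ Escape B t}, fun t ht => ?_, ?_, ?_⟩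
  · by_contra htB
    exact ht.2 (.base htB)
  · exact (Escape.eventual_not_of_not h).mono fun u hu => ⟨List.cons_ne_nil _ _, hu⟩
  · rintro t ⟨-, ht⟩ -
    exact (Escape.eventual_not_of_not ht).mono fun u hu => ⟨by simp, hu⟩

namespace IsPruning

variable {φ : List D → List D} (hφ : IsPruning φ)
include hφ

theorem apply_prefix {l l' : List D} (h : l <+: l') : φ l <+: φ l' := by
  obtain ⟨s, rfl⟩ := h
  induction s using List.reverseRecOn with
  | nil => simp
  | append_singleton s u ih =>
    obtain ⟨w, -, he⟩ := hφ (l ++ s) u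
    rw [← List.append_assoc, he]
    exact ih.trans (List.prefix_append _ _)

variable (h0 : φ [] = [])
include h0

theorem length_apply (l : List D) : (φ l).length = l.length := by
  induction l using List.reverseRecOn with
  | nil => simp [h0]
  | append_singleton l u ih =>
    obtain ⟨w, -, he⟩ := hφ l u
    simp [he, ih]

theorem apply_take (l : List D) (k : ℕ) : φ (l.take k) = (φ l).take k := by
  have h := List.prefix_iff_eq_take.mp (hφ.apply_prefix (List.take_prefix k l))
  rw [h, hφ.length_apply h0, List.length_take, ← hφ.length_apply h0 l, ← List.take_take,
    List.take_length]

end IsPruning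

section BranchSeq

omit [NormedAddCommGroup X] [NormedSpace ℝ X]

omit [Preorder D] in
theorem branchSeq_eq_take (x : List D → X) {t t' : List D} (h : t <+: t') :
    branchSeq x t = (branchSeq x t').take t.length := by
  have hlen : min t.length t'.length = t.length := min_eq_left h.length_le
  rw [branchSeq, branchSeq, ← List.map_take, List.take_range, hlen]
  refine List.map_congr_left fun i hi => ?_
  rw [List.prefix_iff_eq_take.mp h, List.take_take, List.mem_range.mp hi |> min_eq_left]

omit [Preorder D] in
theorem branchSeq_prefix (x : List D → X) {t t' : List D} (h : t <+: t') :
    branchSeq x t <+: branchSeq x t' := by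
  rw [branchSeq_eq_take x h]
  exact List.take_prefix _ _

theorem branchSeq_comp {φ : List D → List D} (hφ : IsPruning φ) (h0 : φ [] = [])
    (x : List D → X) (l : List D) : branchSeq (x ∘ φ) l = branchSeq x (φ l) := by
  rw [branchSeq, branchSeq, hφ.length_apply h0]
  exact List.map_congr_left fun i _ => congrArg x (hφ.apply_take h0 l (i + 1))

end BranchSeq

omit [NormedSpace ℝ X] in
theorem NormallyWeaklyNull.comp {ν : D → Set X} (hν : Antitone ν) {x : List D → X}
    (hx : NormallyWeaklyNull ν x) {φ : List D → List D} (hφ : IsPruning φ) :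
    NormallyWeaklyNull ν (x ∘ φ) := by
  intro t u
  obtain ⟨w, huw, he⟩ := hφ t u
  simp only [Function.comp_apply, he]
  exact ⟨(hx (φ t) w).1, hν huw (hx (φ t) w).2⟩

theorem tree_dichotomy_general (ν : D → Set X)
    (hle : ∀ u v : D, u ≤ v ↔ ν v ⊆ ν u)
    (P : List X → Prop) (hP : ∀ l l' : List X, l <+: l' → P l' → P l) :
    Xor'
      (∀ x : List D → X, NormallyWeaklyNull ν x → Big {t : List D | P (branchSeq x t)})
      (∃ x : List D → X, NormallyWeaklyNull ν x ∧
        ∀ v : ℕ → D, ∃ n : ℕ,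
          ¬ P (branchSeq x (List.ofFn fun i : Fin (n + 1) => v i))) := by
  by_cases hbig : ∀ x : List D → X, NormallyWeaklyNull ν x → Big {t | P (branchSeq x t)}
  · refine Or.inl ⟨hbig, fun ⟨x, hx, hleave⟩ => ?_⟩
    obtain ⟨B, hB, hinev⟩ := hbig x hx
    obtain ⟨v, hv⟩ := hinev.exists_branch
    obtain ⟨n, hn⟩ := hleave v
    exact hn (hB (hv n))
  refine Or.inr ⟨?_, hbig⟩
  obtain ⟨x, hx, hnot⟩ := not_forall₂.mp hbig
  have hesc : Escape {t | P (branchSeq x t)} [] :=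
    by_contra fun h => hnot (big_of_not_escape_nil h)
  obtain ⟨φ, hφ, hφ0, hleave⟩ := hesc.exists_pruning
  refine ⟨x ∘ φ, hx.comp (fun u v => (hle u v).mp) hφ, fun v => ?_⟩
  obtain ⟨n, hn⟩ := hleave v
  have hprefix :
      φ (List.ofFn fun i : Fin n => v i) <+: φ (List.ofFn fun i : Fin (n + 1) => v i) :=
    hφ.apply_prefix (by rw [List.ofFn_succ_eq_append]; exact List.prefix_append _ _)
  refine ⟨n, fun hPn => hn ?_⟩
  rw [branchSeq_comp hφ hφ0] at hPn
  exact hP _ _ (branchSeq_prefix x hprefix) hPn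

/-- Let `X` be a Banach space, `D` a weak neighborhood basis at `0` in `X` (ordered by
reverse inclusion), and `P` a property of finite sequences in `X` closed under taking
initial segments. Then exactly one of the following holds: (i) for every normally
weakly null collection `(x_t)_{t ∈ D^{<ℕ}} ⊆ B_X`, the set of `t` such that
`(x_{t|_i})_{i ≤ |t|}` has `P` is big; (ii) there is a normally weakly null collection
`(x_t)_{t ∈ D^{<ℕ}} ⊆ B_X` such that along every infinite branch some finite initial
segment of the values fails `P`. -/
theorem tree_dichotomy [CompleteSpace X] (ν : D → Set X)
    (hle : ∀ u v : D, u ≤ v ↔ ν v ⊆ ν u)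
    (hnbhd : ∀ u : D, ∃ s : Finset (X →L[ℝ] ℝ), ∃ ε : ℝ, 0 < ε ∧
      {x : X | ∀ f ∈ s, |f x| < ε} ⊆ ν u)
    (hbasis : ∀ (s : Finset (X →L[ℝ] ℝ)) (ε : ℝ), 0 < ε →
      ∃ u : D, ν u ⊆ {x : X | ∀ f ∈ s, |f x| < ε})
    (P : List X → Prop) (hP : ∀ l l' : List X, l <+: l' → P l' → P l) :
    Xor'
      (∀ x : List D → X, NormallyWeaklyNull ν x → Big {t : List D | P (branchSeq x t)})
      (∃ x : List D → X, NormallyWeaklyNull ν x ∧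
        ∀ v : ℕ → D, ∃ n : ℕ,
          ¬ P (branchSeq x (List.ofFn fun i : Fin (n + 1) => v i))) :=
  tree_dichotomy_general ν hle P hP
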